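/- arXiv:1403.7927 — 2 statements merged into one kernel-verified Lean document; each statement's English description precedes it below -/
import Mathlib

section
/- Let a, b be complex numbers with Re a > 0 and Re b > 0, and let n be a natural number with n > Re a − Re b. Then for all real ω > 0 and all real α > 0, the quantity Φ_n = (1/Γ(b)) ∫_0^∞ t^{n+b-1} (t+α)^{-a} e^{-ω t} dt satisfies the bound |Φ_n| ≤ ( |(b)_n| / |Γ(a)| ) · B(Re a, n + Re b − Re a) · ω^{Re a − n − Re b}, where B denotes the real Beta function. In particular Φ_n = O(ω^{Re a − n − Re b}) as ω → ∞, uniformly with respect to α > 0. -/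
/-! With `L(a, c; ω, α) = ∫₀^∞ t^{c-1} (t+α)^{-a} e^{-ωt} dt` we have `Φ_n = L(a, n+b; ω, α) / Γ(b)`.
Inserting `Γ(a) (t+α)^{-a} = ∫₀^∞ u^{a-1} e^{-(t+α)u} du` writes `Γ(a) L(a, c; ω, α)` as the double
integral of `t^{c-1} u^{a-1} e^{-ωt-αu-tu}`, a kernel symmetric under `(t, c, ω) ↔ (u, a, α)`, so
Fubini gives the duality `Γ(a) L(a, c; ω, α) = Γ(c) L(c, a; α, ω)`. For `c = n + b` we have
`Γ(c) = (b)_n Γ(b)`, and bounding `e^{-αu} ≤ 1` in the dual integral (the only place `α` enters)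
leaves `∫₀^∞ u^{Re a-1} (u+ω)^{-Re c} du = ω^{Re a - Re c} B(Re a, Re c - Re a)`. -/

open MeasureTheory Set Complex Finset

/-- The real Beta function B(p,q) = ∫_0^∞ s^{p-1}(1+s)^{-p-q} ds. -/
noncomputable def realBeta (p q : ℝ) : ℝ :=
  ∫ s in Set.Ioi (0:ℝ), s ^ (p - 1) * (1 + s) ^ (-p - q)

lemma ascPochhammer_eval_eq_prod_range {R : Type*} [CommSemiring R] (n : ℕ) (r : R) :
    (ascPochhammer R n).eval r = ∏ j ∈ range n, (r + j) := by
  induction n with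
  | zero => simp
  | succ n ih => simp [ascPochhammer_succ_right, ih, prod_range_succ]

lemma Complex.ne_neg_natCast_of_re_pos {s : ℂ} (hs : 0 < s.re) (k : ℕ) : s ≠ -k := by
  rintro rfl
  simp only [neg_re, natCast_re, Left.neg_pos_iff] at hs
  exact (Nat.cast_nonneg k).not_gt hs

lemma Complex.Gamma_add_nat_eq_prod_mul_Gamma {b : ℂ} (hb : ∀ k : ℕ, b ≠ -k) (n : ℕ) :
    Gamma (b + n) = (∏ j ∈ range n, (b + j)) * Gamma b := by
  rw [← ascPochhammer_eval_eq_prod_range, ← Gamma_add_nat_div_Gamma_eq b hb,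
    div_mul_cancel₀ _ (Gamma_ne_zero hb)]

lemma Real.integrableOn_rpow_mul_exp_neg_mul {s r : ℝ} (hs : -1 < s) (hr : 0 < r) :
    IntegrableOn (fun x : ℝ => x ^ s * Real.exp (-r * x)) (Ioi 0) := by
  simpa using integrableOn_rpow_mul_exp_neg_mul_rpow hs one_pos hr

lemma Complex.integral_cpow_mul_exp_neg_mul_Ioi_eq_cpow_neg {a : ℂ} {r : ℝ} (ha : 0 < a.re)
    (hr : 0 < r) :
    ∫ t in Ioi (0 : ℝ), (t : ℂ) ^ (a - 1) * cexp (-(r * t)) = (r : ℂ) ^ (-a) * Gamma a := by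
  rw [integral_cpow_mul_exp_neg_mul_Ioi ha hr, one_div,
    inv_cpow _ _ (by rw [arg_ofReal_of_nonneg hr.le]; exact Real.pi_ne_zero.symm), cpow_neg]

lemma integrableOn_rpow_mul_add_rpow {p q w : ℝ} (hp : 0 < p) (hq : 0 < q) (hw : 0 < w) :
    IntegrableOn (fun u : ℝ => u ^ (p - 1) * (u + w) ^ (-(p + q))) (Ioi 0) := by
  have hpos : ∀ u ∈ Ioi (0 : ℝ), 0 < u + w := fun u hu => by linarith [mem_Ioi.mp hu]
  have hcont : ContinuousOn (fun u : ℝ => (u + w) ^ (-(p + q))) (Ioi 0) :=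
    fun u hu => ((continuousAt_id.add continuousAt_const).rpow_const
      (Or.inl (hpos u hu).ne')).continuousWithinAt
  refine mellin_convergent_of_isBigO_scalar (a := p + q) (b := 0)
    (hcont.locallyIntegrableOn measurableSet_Ioi) ?_ (by linarith) ?_ hp
  · refine Asymptotics.IsBigO.of_bound 1 ?_
    filter_upwards [Filter.eventually_gt_atTop 0] with u hu
    rw [one_mul, Real.norm_of_nonneg (by positivity), Real.norm_of_nonneg (by positivity)]
    exact Real.rpow_le_rpow_of_nonpos hu (by linarith) (by linarith)
  · refine Asymptotics.IsBigO.of_bound (w ^ (-(p + q))) ?_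
    filter_upwards [self_mem_nhdsWithin] with u (hu : 0 < u)
    rw [neg_zero, Real.rpow_zero, norm_one, mul_one, Real.norm_of_nonneg (by positivity)]
    exact Real.rpow_le_rpow_of_nonpos hw (by linarith) (by linarith)

lemma integral_rpow_mul_add_rpow {p q w : ℝ} (hw : 0 < w) :
    ∫ u in Ioi (0 : ℝ), u ^ (p - 1) * (u + w) ^ (-(p + q)) = w ^ (-q) * realBeta p q := by
  set g := fun u : ℝ => u ^ (p - 1) * (u + w) ^ (-(p + q))
  calc ∫ u in Ioi (0 : ℝ), g u
      = w * ∫ s in Ioi (0 : ℝ), g (w * s) := by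
        rw [integral_comp_mul_left_Ioi g 0 hw, mul_zero, smul_eq_mul, mul_inv_cancel_left₀ hw.ne']
    _ = w * ∫ s in Ioi (0 : ℝ), w ^ (-q - 1) * (s ^ (p - 1) * (1 + s) ^ (-p - q)) := by
        congr 1
        refine setIntegral_congr_fun measurableSet_Ioi fun s (hs : 0 < s) => ?_
        simp only [g]
        rw [show w * s + w = w * (1 + s) by ring, Real.mul_rpow hw.le hs.le,
          Real.mul_rpow hw.le (by linarith), show -q - 1 = (p - 1) + -(p + q) by ring,
          Real.rpow_add hw, neg_add']
        ring
    _ = w ^ (-q) * realBeta p q := by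
        rw [integral_const_mul, realBeta, ← mul_assoc, mul_comm w, ← Real.rpow_add_one hw.ne',
          sub_add_cancel]

noncomputable def shiftedPowLaplace (a c : ℂ) (ω α : ℝ) : ℂ :=
  ∫ t in Ioi (0 : ℝ), (t : ℂ) ^ (c - 1) * ((t + α : ℝ) : ℂ) ^ (-a) * cexp (-(ω : ℂ) * t)

noncomputable def doubleGammaKernel (a c : ℂ) (ω α t u : ℝ) : ℂ :=
  (t : ℂ) ^ (c - 1) * (u : ℂ) ^ (a - 1) * (Real.exp (-(ω * t + α * u + t * u)) : ℂ)

lemma doubleGammaKernel_comm (a c : ℂ) (ω α t u : ℝ) :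
    doubleGammaKernel a c ω α t u = doubleGammaKernel c a α ω u t := by
  simp only [doubleGammaKernel]
  rw [show ω * t + α * u + t * u = α * u + ω * t + u * t by ring]
  ring

lemma norm_doubleGammaKernel_le {a c : ℂ} {ω α t u : ℝ} (ht : 0 < t) (hu : 0 < u) :
    ‖doubleGammaKernel a c ω α t u‖ ≤
      t ^ (c.re - 1) * Real.exp (-ω * t) * (u ^ (a.re - 1) * Real.exp (-α * u)) := by
  rw [doubleGammaKernel, norm_mul, norm_mul, norm_cpow_eq_rpow_re_of_pos ht,
    norm_cpow_eq_rpow_re_of_pos hu, Complex.norm_real, Real.norm_of_nonneg (Real.exp_pos _).le,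
    sub_re, sub_re, one_re, mul_mul_mul_comm, ← Real.exp_add]
  gcongr
  nlinarith

lemma integrable_doubleGammaKernel {a c : ℂ} {ω α : ℝ} (ha : 0 < a.re) (hc : 0 < c.re)
    (hω : 0 < ω) (hα : 0 < α) :
    Integrable (Function.uncurry (doubleGammaKernel a c ω α))
      ((volume.restrict (Ioi 0)).prod (volume.restrict (Ioi 0))) := by
  refine ((Real.integrableOn_rpow_mul_exp_neg_mul (s := c.re - 1) (by linarith) hω).mul_prod
    (Real.integrableOn_rpow_mul_exp_neg_mul (s := a.re - 1) (by linarith) hα)).mono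
    (by unfold doubleGammaKernel; fun_prop : Measurable _).aestronglyMeasurable ?_
  rw [Measure.prod_restrict, ae_restrict_iff' (measurableSet_Ioi.prod measurableSet_Ioi)]
  refine Filter.Eventually.of_forall fun ⟨t, u⟩ ⟨(ht : 0 < t), (hu : 0 < u)⟩ => ?_
  exact (norm_doubleGammaKernel_le ht hu).trans_eq (Real.norm_of_nonneg (by positivity)).symm

lemma integral_doubleGammaKernel_right {a c : ℂ} {ω α t : ℝ} (ha : 0 < a.re) (h : 0 < t + α) :
    ∫ u in Ioi (0 : ℝ), doubleGammaKernel a c ω α t u =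
      Gamma a * ((t : ℂ) ^ (c - 1) * ((t + α : ℝ) : ℂ) ^ (-a) * cexp (-(ω : ℂ) * t)) := by
  calc ∫ u in Ioi (0 : ℝ), doubleGammaKernel a c ω α t u
      = ∫ u in Ioi (0 : ℝ), (t : ℂ) ^ (c - 1) * cexp (-(ω : ℂ) * t) *
          ((u : ℂ) ^ (a - 1) * cexp (-(((t + α : ℝ) : ℂ) * u))) := by
        refine setIntegral_congr_fun measurableSet_Ioi fun u _ => ?_
        rw [doubleGammaKernel, ofReal_exp, show (((-(ω * t + α * u + t * u) : ℝ)) : ℂ) =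
          -(ω : ℂ) * t + -(((t + α : ℝ) : ℂ) * u) by push_cast; ring, Complex.exp_add]
        ring
    _ = _ := by
        rw [integral_const_mul, integral_cpow_mul_exp_neg_mul_Ioi_eq_cpow_neg ha h]
        ring

lemma Gamma_mul_shiftedPowLaplace {a c : ℂ} {ω α : ℝ} (ha : 0 < a.re) (hα : 0 ≤ α) :
    Gamma a * shiftedPowLaplace a c ω α =
      ∫ t in Ioi (0 : ℝ), ∫ u in Ioi (0 : ℝ), doubleGammaKernel a c ω α t u := by
  rw [shiftedPowLaplace, ← integral_const_mul]
  exact setIntegral_congr_fun measurableSet_Ioi fun t (ht : 0 < t) =>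
    (integral_doubleGammaKernel_right ha (by linarith)).symm

theorem Gamma_mul_shiftedPowLaplace_eq {a c : ℂ} {ω α : ℝ} (ha : 0 < a.re) (hc : 0 < c.re)
    (hω : 0 < ω) (hα : 0 < α) :
    Gamma a * shiftedPowLaplace a c ω α = Gamma c * shiftedPowLaplace c a α ω := by
  rw [Gamma_mul_shiftedPowLaplace ha hα.le, Gamma_mul_shiftedPowLaplace hc hω.le,
    integral_integral_swap (integrable_doubleGammaKernel ha hc hω hα)]
  simp_rw [doubleGammaKernel_comm a c]

theorem norm_shiftedPowLaplace_le {a c : ℂ} {ω α : ℝ} (ha : 0 < a.re) (hac : a.re < c.re)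
    (hω : 0 < ω) (hα : 0 ≤ α) :
    ‖shiftedPowLaplace c a α ω‖ ≤ ω ^ (a.re - c.re) * realBeta a.re (c.re - a.re) := by
  have hbound : ∀ᵐ u : ℝ ∂(volume.restrict (Ioi (0 : ℝ))),
      ‖(u : ℂ) ^ (a - 1) * ((u + ω : ℝ) : ℂ) ^ (-c) * cexp (-(α : ℂ) * u)‖ ≤
        u ^ (a.re - 1) * (u + ω) ^ (-(a.re + (c.re - a.re))) := by
    filter_upwards [ae_restrict_mem measurableSet_Ioi] with u (hu : 0 < u)
    rw [norm_mul, norm_mul, norm_cpow_eq_rpow_re_of_pos hu,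
      norm_cpow_eq_rpow_re_of_pos (by linarith), sub_re, one_re, neg_re, add_sub_cancel,
      ← ofReal_neg, ← ofReal_mul, norm_exp_ofReal]
    refine mul_le_of_le_one_right (by positivity) (Real.exp_le_one_iff.mpr ?_)
    nlinarith
  calc ‖shiftedPowLaplace c a α ω‖
      ≤ ∫ u in Ioi (0 : ℝ), u ^ (a.re - 1) * (u + ω) ^ (-(a.re + (c.re - a.re))) :=
        norm_integral_le_of_norm_le
          (integrableOn_rpow_mul_add_rpow ha (by linarith) hω) hbound
    _ = ω ^ (a.re - c.re) * realBeta a.re (c.re - a.re) := by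
        rw [integral_rpow_mul_add_rpow hω, neg_sub]

/-- For Re a > 0, Re b > 0 and n > Re a − Re b, for all ω > 0 and α > 0,
|Φ_n| ≤ (|(b)_n| / |Γ(a)|) · B(Re a, n + Re b − Re a) · ω^{Re a − n − Re b};
in particular Φ_n = O(ω^{Re a − n − Re b}) as ω → ∞, uniformly in α. -/
theorem Phi_uniform_bound (a b : ℂ) (ha : 0 < a.re) (hb : 0 < b.re)
    (n : ℕ) (hn : a.re - b.re < (n : ℝ)) :
    ∀ ω : ℝ, 0 < ω → ∀ α : ℝ, 0 < α →
      ‖(1 / Complex.Gamma b) *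
          ∫ t in Set.Ioi (0:ℝ),
            (t : ℂ) ^ ((n : ℂ) + b - 1) * ((t + α : ℝ) : ℂ) ^ (-a) *
              Complex.exp (-(ω : ℂ) * t)‖ ≤
        (‖∏ j ∈ Finset.range n, (b + j)‖ / ‖Complex.Gamma a‖) *
          realBeta a.re ((n : ℝ) + b.re - a.re) * ω ^ (a.re - (n : ℝ) - b.re) := by
  intro ω hω α hα
  have hc : ((n : ℂ) + b).re = n + b.re := by simp
  have hb_ne := ne_neg_natCast_of_re_pos hb
  have hGamma : Gamma ((n : ℂ) + b) = (∏ j ∈ range n, (b + j)) * Gamma b := by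
    rw [add_comm]; exact Gamma_add_nat_eq_prod_mul_Gamma hb_ne n
  have hPhi : 1 / Gamma b * shiftedPowLaplace a ((n : ℂ) + b) ω α =
      (∏ j ∈ range n, (b + j)) / Gamma a * shiftedPowLaplace ((n : ℂ) + b) a α ω := by
    have hdual :=
      Gamma_mul_shiftedPowLaplace_eq (c := (n : ℂ) + b) ha (by rw [hc]; positivity) hω hα
    rw [hGamma] at hdual
    field_simp [Gamma_ne_zero hb_ne, Gamma_ne_zero_of_re_pos ha]
    linear_combination hdual
  have hbound := norm_shiftedPowLaplace_le (c := (n : ℂ) + b) ha (by rw [hc]; linarith) hω hα.le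
  rw [hc] at hbound
  calc _ = ‖∏ j ∈ range n, (b + j)‖ / ‖Gamma a‖ * ‖shiftedPowLaplace ((n : ℂ) + b) a α ω‖ := by
        rw [← norm_div, ← norm_mul, ← hPhi, shiftedPowLaplace]
    _ ≤ ‖∏ j ∈ range n, (b + j)‖ / ‖Gamma a‖ *
          (ω ^ (a.re - (n + b.re)) * realBeta a.re (n + b.re - a.re)) := by gcongr
    _ = _ := by rw [← sub_sub]; ring
end

section
/- Let z > 0 be real, set α = ln((z+1)/z), and define h : [0,∞) → ℝ by h(0) = 1 and, for t > 0, h(t) = ((1−e^{−t})/t) · ((e^t − e^{−α})/(t+α)) · (α/(1−e^{−α})). Then h is differentiable from the right at t = 0 with right derivative h′(0) = z + 1/2 − 1/α. Consequently, for any real b, the function f(t) = h(t)^{b} (with f(0)=1) has right derivative at 0 equal to f₁ = (b/(2d)) (2 d z + d − 2 z), where d = z α. (This is the first Taylor coefficient f₁ of the expansion f(t) = ∑ f_k t^k used in the Kummer-function expansion of the conical function.) -/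
open Set Asymptotics Real

/-
The first factor (1 - e^{-t})/t, completed by 1 at t = 0, is the difference quotient
`dslope g 0` of g(t) = 1 - e^{-t}; for a C² function g, second-order Taylor expansion shows that
`dslope g a` has derivative g''(a)/2 at a, here -1/2. The other two factors are smooth at 0, so the
product rule gives h'(0) = 1/(1 - e^{-α}) - 1/2 - 1/α, and e^{-α} = z/(z+1) turns this into
z + 1/2 - 1/α. The statement about h^b is the chain rule at h(0) = 1.
-/

theorem hasDerivAt_dslope_same_of_contDiff {E : Type*} [NormedAddCommGroup E] [NormedSpace ℝ E]
    {f : ℝ → E} {a : ℝ} (hf : ContDiff ℝ 2 f) :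
    HasDerivAt (dslope f a) ((2 : ℝ)⁻¹ • iteratedDeriv 2 f a) a := by
  rw [hasDerivAt_iff_isLittleO, dslope_same]
  have remainder : ∀ x, dslope f a x - deriv f a - (x - a) • (2 : ℝ)⁻¹ • iteratedDeriv 2 f a =
      (x - a)⁻¹ • (f x - taylorWithinEval f 2 univ a x) := by
    intro x
    rcases eq_or_ne x a with rfl | hx
    · simp [dslope_same]
    have hxa : x - a ≠ 0 := sub_ne_zero.mpr hx
    simp only [dslope_of_ne _ hx, slope_def_module, taylor_within_apply, Finset.sum_range_succ,
      Finset.sum_range_zero, iteratedDerivWithin_univ, iteratedDeriv_zero, iteratedDeriv_one]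
    match_scalars <;> field_simp <;> ring
  simp_rw [remainder]
  refine ((isBigO_refl (fun x => (x - a)⁻¹) _).smul_isLittleO
    (taylor_isLittleO_univ hf)).congr_right fun x => ?_
  rcases eq_or_ne x a with rfl | hx
  · simp
  · rw [smul_eq_mul, pow_two, inv_mul_cancel_left₀ (sub_ne_zero.mpr hx)]

theorem hasDerivAt_one_sub_exp_neg (t : ℝ) :
    HasDerivAt (fun t : ℝ => 1 - exp (-t)) (exp (-t)) t := by
  simpa using ((hasDerivAt_neg t).exp).const_sub 1

theorem hasDerivAt_dslope_one_sub_exp_neg :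
    HasDerivAt (dslope (fun t : ℝ => 1 - exp (-t)) 0) (-(1 / 2)) 0 := by
  have deriv_exp_neg : deriv (fun t : ℝ => exp (-t)) = fun t => -exp (-t) :=
    funext fun t => ((hasDerivAt_neg t).exp).deriv.trans (by ring)
  have deriv_one_sub : deriv (fun t : ℝ => 1 - exp (-t)) = fun t => exp (-t) :=
    funext fun t => (hasDerivAt_one_sub_exp_neg t).deriv
  refine (hasDerivAt_dslope_same_of_contDiff (by fun_prop)).congr_deriv ?_
  simp [iteratedDeriv_succ, deriv_one_sub, deriv_exp_neg]

theorem hasDerivWithinAt_Ici_of_eq_one_sub_exp_neg_div {α : ℝ} (hα : α ≠ 0) {h : ℝ → ℝ}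
    (h0 : h 0 = 1)
    (hpos : ∀ t : ℝ, 0 < t →
      h t = ((1 - exp (-t)) / t) * ((exp t - exp (-α)) / (t + α)) * (α / (1 - exp (-α)))) :
    HasDerivWithinAt h (1 / (1 - exp (-α)) - 1 / 2 - 1 / α) (Ici 0) 0 := by
  have g0 : dslope (fun t : ℝ => 1 - exp (-t)) 0 0 = 1 := by
    simp [dslope_same, (hasDerivAt_one_sub_exp_neg 0).deriv]
  have hexp_ne : 1 - exp (-α) ≠ 0 := sub_ne_zero.mpr fun h => hα (by simpa using h.symm)
  have hB : HasDerivAt (fun t => (exp t - exp (-α)) / (t + α))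
      ((exp 0 * (0 + α) - (exp 0 - exp (-α)) * 1) / (0 + α) ^ 2) 0 :=
    ((hasDerivAt_exp 0).sub_const _).div ((hasDerivAt_id 0).add_const α) (by simpa using hα)
  have hG := (hasDerivAt_dslope_one_sub_exp_neg.mul hB).mul_const (α / (1 - exp (-α)))
  have at_zero : h 0 = (dslope (fun t : ℝ => 1 - exp (-t)) 0 *
      fun t => (exp t - exp (-α)) / (t + α)) 0 * (α / (1 - exp (-α))) := by
    simp only [Pi.mul_apply, h0, g0, exp_zero, zero_add]
    field_simp
  refine (hG.hasDerivWithinAt.congr_deriv ?_).congr (fun t ht => ?_) at_zero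
  · simp only [g0, exp_zero, zero_add]
    field_simp
    ring
  · rcases (mem_Ici.mp ht).eq_or_lt with rfl | ht
    · exact at_zero
    · simp [hpos t ht, dslope_of_ne _ ht.ne', slope_def_field]

/-- With z > 0, α = ln((z+1)/z), and
h(t) = ((1−e^{−t})/t)·((e^t − e^{−α})/(t+α))·(α/(1−e^{−α})) for t > 0, h(0) = 1,
the function h has right derivative z + 1/2 − 1/α at 0, and consequently for any b,
f = h^b has right derivative f₁ = (b/(2d))(2dz + d − 2z) at 0, where d = zα. -/
theorem h_right_derivative_at_zero (z : ℝ) (hz : 0 < z) (α : ℝ)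
    (hα : α = Real.log ((z + 1) / z)) (d : ℝ) (hd : d = z * α) (h : ℝ → ℝ)
    (h0 : h 0 = 1)
    (hpos : ∀ t : ℝ, 0 < t →
      h t = ((1 - Real.exp (-t)) / t) * ((Real.exp t - Real.exp (-α)) / (t + α)) *
        (α / (1 - Real.exp (-α)))) :
    HasDerivWithinAt h (z + 1/2 - 1/α) (Set.Ici 0) 0 ∧
    ∀ b : ℝ, HasDerivWithinAt (fun t => h t ^ b)
      (b / (2 * d) * (2 * d * z + d - 2 * z)) (Set.Ici 0) 0 := by
  have hα_pos : 0 < α := by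
    rw [hα]
    exact log_pos ((one_lt_div hz).mpr (by linarith))
  have hexp : exp (-α) = z / (z + 1) := by
    rw [hα, exp_neg, exp_log (by positivity), inv_div]
  have hderiv : HasDerivWithinAt h (z + 1/2 - 1/α) (Ici 0) 0 := by
    refine (hasDerivWithinAt_Ici_of_eq_one_sub_exp_neg_div hα_pos.ne' h0 hpos).congr_deriv ?_
    rw [hexp]
    field_simp
    ring
  refine ⟨hderiv, fun b => ?_⟩
  convert hderiv.rpow_const (p := b) (Or.inl (by simp [h0])) using 1
  rw [h0, one_rpow, hd]
  field_simp
end
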